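/- Let n be a natural number and v_1, ..., v_n be vectors in C^n such that for every i = 1, ..., n the i-th component of v_i is nonzero. Then there exist natural numbers m_1, ..., m_n with m_i ≤ n for all i, such that every component of the vector v = m_1·v_1 + ... + m_n·v_n is nonzero. -/
import Mathlib

open Finset

/-- If `v 1, ..., v n` are vectors in `ℂ^n` such that the `i`-th
component of `v i` is nonzero for each `i`, then there are positive natural
numbers `m i ≤ n` such that every component of `∑ i, m i • v i` is nonzero. -/
theorem stmt0 (n : ℕ) (v : Fin n → (Fin n → ℂ))
    (hv : ∀ i : Fin n, v i i ≠ 0) :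
    ∃ m : Fin n → ℕ, (∀ i, 1 ≤ m i ∧ m i ≤ n) ∧
      ∀ j : Fin n, (∑ i, (m i : ℂ) • v i) j ≠ 0 := by
  classical
  rcases Nat.lt_or_ge n 2 with hn | hn
  · -- n = 0 or 1
    interval_cases n
    · exact ⟨fun _ => 1, fun i => i.elim0, fun j => j.elim0⟩
    · refine ⟨fun _ => 1, fun i => ⟨le_refl 1, le_refl 1⟩, fun j => ?_⟩
      have hj : j = 0 := Subsingleton.elim _ _
      subst hj
      simpa [Fin.sum_univ_one] using hv 0
  -- main case n ≥ 2
  by_contra hcon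
  push_neg at hcon
  have hbad : ∀ m : Fin n → ℕ, (∀ i, 1 ≤ m i ∧ m i ≤ n) →
      ∃ j, ∑ i, (m i : ℂ) * v i j = 0 := by
    intro m hm
    obtain ⟨j, hj⟩ := hcon m hm
    exact ⟨j, by simpa using hj⟩
  set grid : Finset (Fin n → ℕ) := Fintype.piFinset (fun _ => Finset.Icc 1 n) with hgrid
  set bad : Fin n → Finset (Fin n → ℕ) :=
    fun j => grid.filter (fun m => ∑ i, (m i : ℂ) * v i j = 0) with hbaddef
  have hgridcard : grid.card = n ^ n := by
    simp [hgrid, Fintype.card_piFinset, Nat.card_Icc]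
  set small : Fin n → Finset (Fin n → ℕ) :=
    fun j => Fintype.piFinset (Function.update (fun _ => Finset.Icc 1 n) j {1}) with hsmdef
  have hsmallcard : ∀ j, (small j).card = n ^ (n - 1) := by
    intro j
    rw [hsmdef]
    rw [Fintype.card_piFinset]
    have hc : ∀ i : Fin n, (Function.update (fun _ : Fin n => Finset.Icc 1 n) j {1} i).card
        = Function.update (fun _ : Fin n => n) j 1 i := by
      intro i
      by_cases h : i = j
      · subst h; simp
      · simp [Function.update_of_ne h, Nat.card_Icc]
    rw [Finset.prod_congr rfl (fun i _ => hc i),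
      Finset.prod_update_of_mem (Finset.mem_univ j)]
    simp [Finset.sdiff_singleton_eq_erase]
  have hsplit : ∀ (m : Fin n → ℕ) (j : Fin n),
      ∑ i, (m i : ℂ) * v i j
        = (m j : ℂ) * v j j + ∑ i ∈ univ.erase j, (m i : ℂ) * v i j :=
    fun m j => (Finset.add_sum_erase _ _ (Finset.mem_univ j)).symm
  have hinj : ∀ j : Fin n, Set.InjOn (fun m : Fin n → ℕ => Function.update m j 1) ↑(bad j) := by
    intro j m hm m' hm' hup
    simp only [hbaddef, Finset.mem_coe, Finset.mem_filter] at hm hm'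
    have hoff : ∀ i, i ≠ j → m i = m' i := by
      intro i hi
      have := congrFun hup i
      simpa [Function.update_of_ne hi] using this
    have hsum : ∑ i ∈ univ.erase j, (m i : ℂ) * v i j
        = ∑ i ∈ univ.erase j, (m' i : ℂ) * v i j := by
      refine Finset.sum_congr rfl fun i hi => ?_
      rw [hoff i (Finset.ne_of_mem_erase hi)]
    have h1 := hm.2
    have h2 := hm'.2
    rw [hsplit m j, hsum] at h1
    rw [hsplit m' j] at h2
    have hmm : (m j : ℂ) * v j j = (m' j : ℂ) * v j j := by linear_combination h1 - h2
    have hjj : m j = m' j := by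
      have := mul_right_cancel₀ (hv j) hmm
      exact_mod_cast this
    funext i
    by_cases hij : i = j
    · rw [hij]; exact hjj
    · exact hoff i hij
  have hmaps : ∀ j : Fin n, ∀ m ∈ bad j, Function.update m j 1 ∈ small j := by
    intro j m hm
    have hmg : m ∈ grid := Finset.mem_filter.mp hm |>.1
    rw [hsmdef, Fintype.mem_piFinset]
    intro i
    by_cases hij : i = j
    · subst hij
      simp [Function.update_self]
    · rw [Function.update_of_ne hij, Function.update_of_ne hij]
      exact (Fintype.mem_piFinset.mp hmg) i
  have hble : ∀ j, (bad j).card ≤ n ^ (n - 1) := by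
    intro j
    rw [← hsmallcard j]
    exact Finset.card_le_card_of_injOn _ (hmaps j) (hinj j)
  have hsub : grid ⊆ Finset.univ.biUnion bad := by
    intro m hm
    have hmv : ∀ i, 1 ≤ m i ∧ m i ≤ n := by
      intro i
      have := (Fintype.mem_piFinset.mp hm) i
      simpa [Finset.mem_Icc] using this
    obtain ⟨j, hj⟩ := hbad m hmv
    exact Finset.mem_biUnion.mpr ⟨j, Finset.mem_univ j, Finset.mem_filter.mpr ⟨hm, hj⟩⟩
  have hpow : n * n ^ (n - 1) = n ^ n := by
    obtain ⟨k, rfl⟩ : ∃ k, n = k + 1 := ⟨n - 1, by omega⟩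
    simp [pow_succ, Nat.add_sub_cancel, mul_comm]
  have heq : ∀ j, (bad j).card = n ^ (n - 1) := by
    by_contra hne
    push_neg at hne
    obtain ⟨j0, hj0⟩ := hne
    have hlt : (bad j0).card < n ^ (n - 1) := lt_of_le_of_ne (hble j0) hj0
    have h1 : (n : ℕ) ^ n ≤ ∑ j : Fin n, (bad j).card := by
      calc n ^ n = grid.card := hgridcard.symm
        _ ≤ (Finset.univ.biUnion bad).card := Finset.card_le_card hsub
        _ ≤ ∑ j : Fin n, (bad j).card := Finset.card_biUnion_le
    have h2 : ∑ j : Fin n, (bad j).card < ∑ _j : Fin n, n ^ (n - 1) :=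
      Finset.sum_lt_sum (fun j _ => hble j) ⟨j0, Finset.mem_univ j0, hlt⟩
    have h3 : ∑ _j : Fin n, n ^ (n - 1) = n ^ n := by
      rw [Finset.sum_const, Finset.card_univ, Fintype.card_fin, smul_eq_mul, hpow]
    omega
  have hsurj : ∀ j : Fin n, ∀ p ∈ small j, ∃ m ∈ bad j, Function.update m j 1 = p := by
    intro j p hp
    have himg : (bad j).image (fun m => Function.update m j 1) = small j := by
      apply Finset.eq_of_subset_of_card_le
      · intro q hq
        obtain ⟨m, hm, rfl⟩ := Finset.mem_image.mp hq
        exact hmaps j m hm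
      · rw [Finset.card_image_of_injOn (hinj j), heq j, hsmallcard j]
    rw [← himg] at hp
    obtain ⟨m, hm, hup⟩ := Finset.mem_image.mp hp
    exact ⟨m, hm, hup⟩
  -- key extension property
  have hH : ∀ j : Fin n, ∀ p : Fin n → ℕ, (∀ i, 1 ≤ p i ∧ p i ≤ n) →
      ∃ t : ℕ, 1 ≤ t ∧ t ≤ n ∧
        (t : ℂ) * v j j + ∑ i ∈ univ.erase j, (p i : ℂ) * v i j = 0 := by
    intro j p hp
    have hq : Function.update p j 1 ∈ small j := by
      rw [hsmdef, Fintype.mem_piFinset]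
      intro i
      by_cases hij : i = j
      · subst hij; simp [Function.update_self]
      · rw [Function.update_of_ne hij, Function.update_of_ne hij]
        exact Finset.mem_Icc.mpr (hp i)
    obtain ⟨m, hm, hup⟩ := hsurj j _ hq
    obtain ⟨hmg, hms⟩ := Finset.mem_filter.mp hm
    have hmb := (Fintype.mem_piFinset.mp hmg) j
    rw [Finset.mem_Icc] at hmb
    refine ⟨m j, hmb.1, hmb.2, ?_⟩
    have hoff : ∀ i, i ≠ j → m i = p i := by
      intro i hi
      have := congrFun hup i
      simpa [Function.update_of_ne hi] using this
    rw [hsplit m j] at hms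
    rw [← hms]
    congr 1
    refine Finset.sum_congr rfl fun i hi => ?_
    rw [hoff i (Finset.ne_of_mem_erase hi)]
  -- the injective tuple
  set m₀ : Fin n → ℕ := fun i => (i : ℕ) + 1 with hm₀def
  have hm₀v : ∀ i, 1 ≤ m₀ i ∧ m₀ i ≤ n := by
    intro i
    have := i.isLt
    constructor <;> simp [hm₀def] <;> omega
  obtain ⟨j, hj0⟩ := hbad m₀ hm₀v
  -- build integer coefficients for row j
  have hddex : ∀ k : Fin n, ∃ d : ℤ, k ≠ j → v k j = (d : ℂ) * v j j := by
    intro k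
    by_cases hk : k = j
    · exact ⟨0, fun h => absurd hk h⟩
    obtain ⟨t1, _, _, ht1⟩ := hH j (fun _ => 1) (fun i => ⟨by beta_reduce; omega, by beta_reduce; omega⟩)
    obtain ⟨t2, _, _, ht2⟩ := hH j (fun i => if i = k then 2 else 1)
      (fun i => by by_cases h : i = k <;> simp [h] <;> omega)
    refine ⟨(t1 : ℤ) - (t2 : ℤ), fun _ => ?_⟩
    have hS : ∑ i ∈ univ.erase j, ((if i = k then 2 else 1 : ℕ) : ℂ) * v i j
        = (∑ i ∈ univ.erase j, ((1 : ℕ) : ℂ) * v i j) + v k j := by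
      have : ∀ i ∈ univ.erase j, ((if i = k then 2 else 1 : ℕ) : ℂ) * v i j
          = ((1 : ℕ) : ℂ) * v i j + (if i = k then v i j else 0) := by
        intro i _
        by_cases h : i = k <;> simp [h] <;> ring
      rw [Finset.sum_congr rfl this, Finset.sum_add_distrib, Finset.sum_ite_eq']
      rw [if_pos (Finset.mem_erase.mpr ⟨hk, Finset.mem_univ k⟩)]
    rw [hS] at ht2
    push_cast
    linear_combination ht2 - ht1
  choose dd hdd using hddex
  set e : Fin n → ℤ := fun i => -dd i with hedef
  -- transfer equation to integers
  have hT : ∀ (p : Fin n → ℕ) (t : ℕ),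
      ((t : ℂ) * v j j + ∑ i ∈ univ.erase j, (p i : ℂ) * v i j = 0) →
      (t : ℤ) = ∑ i ∈ univ.erase j, (p i : ℤ) * e i := by
    intro p t ht
    have h1 : ∑ i ∈ univ.erase j, (p i : ℂ) * v i j
        = ((∑ i ∈ univ.erase j, (p i : ℤ) * dd i : ℤ) : ℂ) * v j j := by
      push_cast
      rw [Finset.sum_mul]
      refine Finset.sum_congr rfl fun i hi => ?_
      rw [hdd i (Finset.ne_of_mem_erase hi)]
      ring
    rw [h1] at ht
    have h2 : (((t : ℤ) + ∑ i ∈ univ.erase j, (p i : ℤ) * dd i : ℤ) : ℂ) * v j j = 0 := by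
      push_cast
      push_cast at ht
      linear_combination ht
    have h3 : ((t : ℤ) + ∑ i ∈ univ.erase j, (p i : ℤ) * dd i : ℤ) = 0 := by
      have := (mul_eq_zero.mp h2).resolve_right (hv j)
      exact_mod_cast this
    have h4 : (t : ℤ) = -∑ i ∈ univ.erase j, (p i : ℤ) * dd i := by linarith
    rw [h4, ← Finset.sum_neg_distrib]
    exact Finset.sum_congr rfl fun i _ => by rw [hedef]; ring
  -- sum of e equals 1
  have hsum1 : ∑ i ∈ univ.erase j, e i = 1 := by
    obtain ⟨t1, ht1a, ht1b, ht1⟩ := hH j (fun _ => 1) (fun i => ⟨by beta_reduce; omega, by beta_reduce; omega⟩)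
    obtain ⟨tn, htna, htnb, htn⟩ := hH j (fun _ => n) (fun i => ⟨by beta_reduce; omega, by beta_reduce; omega⟩)
    have e1 : (t1 : ℤ) = ∑ i ∈ univ.erase j, e i := by
      have := hT (fun _ => 1) t1 ht1
      simpa using this
    have en : (tn : ℤ) = (n : ℤ) * ∑ i ∈ univ.erase j, e i := by
      have := hT (fun _ => n) tn htn
      rw [this, Finset.mul_sum]
    have hb1 : (1 : ℤ) ≤ ∑ i ∈ univ.erase j, e i := by
      rw [← e1]; exact_mod_cast ht1a
    have hbn : (n : ℤ) * ∑ i ∈ univ.erase j, e i ≤ (n : ℤ) := by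
      rw [← en]; exact_mod_cast htnb
    have hn' : (2 : ℤ) ≤ (n : ℤ) := by exact_mod_cast hn
    nlinarith [hb1, hbn, hn']
  -- each e is 0 or 1
  have he01 : ∀ k ∈ univ.erase j, 0 ≤ e k ∧ e k ≤ 1 := by
    intro k hk
    obtain ⟨t, hta, htb, ht⟩ := hH j (fun i => if i = k then n else 1)
      (fun i => by by_cases h : i = k <;> simp [h] <;> omega)
    have heval : (t : ℤ) = 1 + ((n : ℤ) - 1) * e k := by
      have h0 := hT (fun i => if i = k then n else 1) t ht
      have hc : ∀ i ∈ univ.erase j,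
          (((if i = k then n else 1 : ℕ) : ℤ)) * e i
            = e i + (if i = k then ((n : ℤ) - 1) * e i else 0) := by
        intro i _
        by_cases h : i = k <;> simp [h] <;> push_cast <;> ring
      rw [Finset.sum_congr rfl hc, Finset.sum_add_distrib, Finset.sum_ite_eq',
        if_pos hk, hsum1] at h0
      exact h0
    have hta' : (1 : ℤ) ≤ t := by exact_mod_cast hta
    have htb' : (t : ℤ) ≤ (n : ℤ) := by exact_mod_cast htb
    have hn' : (2 : ℤ) ≤ (n : ℤ) := by exact_mod_cast hn
    constructor <;> nlinarith [hta', htb', heval, hn']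
  -- there is exactly one k with e k = 1
  have hkex : ∃ k ∈ univ.erase j, e k = 1 ∧ ∀ i ∈ univ.erase j, i ≠ k → e i = 0 := by
    have hone : ∃ k ∈ univ.erase j, e k = 1 := by
      by_contra hno
      push_neg at hno
      have : ∑ i ∈ univ.erase j, e i ≤ 0 := by
        apply Finset.sum_nonpos
        intro i hi
        have h1 := (he01 i hi).2
        have h2 := hno i hi
        omega
      omega
    obtain ⟨k, hk, hek⟩ := hone
    refine ⟨k, hk, hek, ?_⟩
    have hrest : ∑ i ∈ (univ.erase j).erase k, e i = 0 := by
      have := Finset.add_sum_erase (univ.erase j) e hk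
      omega
    intro i hi hik
    have hmem : i ∈ (univ.erase j).erase k := Finset.mem_erase.mpr ⟨hik, hi⟩
    have := (Finset.sum_eq_zero_iff_of_nonneg
      (fun i hi => (he01 i (Finset.mem_of_mem_erase hi)).1)).mp hrest
    exact this i hmem
  obtain ⟨k, hk, hek1, hek0⟩ := hkex
  -- derive the contradiction with m₀
  rw [hsplit m₀ j] at hj0
  have hfin : (m₀ j : ℤ) = ∑ i ∈ univ.erase j, (m₀ i : ℤ) * e i := hT m₀ (m₀ j) hj0
  have hsingle : ∑ i ∈ univ.erase j, (m₀ i : ℤ) * e i = (m₀ k : ℤ) := by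
    rw [Finset.sum_eq_single_of_mem k hk
      (fun i hi hik => by rw [hek0 i hi hik]; ring), hek1, mul_one]
  rw [hsingle] at hfin
  have : (j : ℕ) = (k : ℕ) := by
    simp only [hm₀def] at hfin
    exact_mod_cast by omega
  have hjk : j = k := Fin.ext this
  exact (Finset.mem_erase.mp hk).1 hjk.symm
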